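/- arXiv:1009.5296 — 9 statements merged into one kernel-verified Lean document; each statement's English description precedes it below -/
import Mathlib

section
/- For integers s, t with 2 ≤ t < s, we have C(s,t) + (t−1)·C(s−1,t) − s·C(s−2,t−1) = C(s−2,t−2). -/
lemma aux_stmt4 (m k : ℕ) :
    Nat.choose (m+2) (k+2) + (k+1) * Nat.choose (m+1) (k+2)
      = Nat.choose m k + (m+2) * Nat.choose m (k+1) := by
  have h1 : Nat.choose (m+2) (k+2) = Nat.choose (m+1) (k+1) + Nat.choose (m+1) (k+2) :=
    Nat.choose_succ_succ' (m+1) (k+1) ▸ rfl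
  have h2 : (m+1) * Nat.choose m (k+1) = Nat.choose (m+1) (k+2) * (k+2) :=
    Nat.add_one_mul_choose_eq m (k+1)
  have h3 : Nat.choose (m+1) (k+1) = Nat.choose m k + Nat.choose m (k+1) :=
    Nat.choose_succ_succ' m k ▸ rfl
  nlinarith [h1, h2, h3]

theorem stmt_4 (s t : ℕ) (ht : 2 ≤ t) (hts : t < s) :
    (Nat.choose s t : ℤ) + ((t : ℤ) - 1) * (Nat.choose (s - 1) t : ℤ)
        - (s : ℤ) * (Nat.choose (s - 2) (t - 1) : ℤ)
      = (Nat.choose (s - 2) (t - 2) : ℤ) := by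
  obtain ⟨m, rfl⟩ : ∃ m, s = m + 2 := ⟨s - 2, by omega⟩
  obtain ⟨k, rfl⟩ : ∃ k, t = k + 2 := ⟨t - 2, by omega⟩
  simp only [Nat.add_sub_cancel, show m + 2 - 1 = m + 1 from rfl,
    show k + 2 - 1 = k + 1 from rfl]
  have h := aux_stmt4 m k
  have h' : (Nat.choose (m+2) (k+2) : ℤ) + (k+1) * Nat.choose (m+1) (k+2)
      = Nat.choose m k + (m+2) * Nat.choose m (k+1) := by exact_mod_cast h
  push_cast
  linarith
end

section
/- Let 0 < β < 1, p = ⌈1/β⌉ − 1, and let G be a graph on n vertices with minimum degree at least (1−β)n. Then G is K_{p+2}-free if and only if G is heavy-free, i.e. D_+(T) = 0 for every clique T on at most p+1 vertices, where D_+(T) = max{0, d(T)/n − (p−|T|+1)β}. -/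
/-!
Every vertex has at most `βn` non-neighbours, so adding a common neighbour `v` of a clique `T`
to `T` lowers `d(T)` by at most `βn`: the common neighbourhood of `insert v T` is that of `T`
intersected with `N(v)`. Hence a clique `T` with `d(T) > (p - |T| + 1)βn` grows greedily, one common
neighbour at a time, into a clique on `p + 2` vertices. Conversely, deleting a vertex `v` from a
`(p + 2)`-clique leaves a `(p + 1)`-clique `T` with `v` among its common neighbours, so
`D_+(T) = d(T)/n > 0`.
-/

/-- The degree of a clique `S`: the number of vertices adjacent to every vertex of `S`. -/
def cliqueDeg {V : Type*} [Fintype V] [DecidableEq V] (G : SimpleGraph V)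
    [DecidableRel G.Adj] (S : Finset V) : ℕ :=
  (Finset.univ.filter (fun v => ∀ u ∈ S, G.Adj u v)).card

/-- `D_+(U) = max {0, d(U)/n - (p - |U| + 1)β}`. -/
noncomputable def Dplus {V : Type*} [Fintype V] [DecidableEq V] (G : SimpleGraph V)
    [DecidableRel G.Adj] (n p : ℕ) (β : ℝ) (U : Finset V) : ℝ :=
  max 0 ((cliqueDeg G U : ℝ) / n - ((p : ℝ) - U.card + 1) * β)

open Finset

section

variable {V : Type*} [Fintype V] [DecidableEq V] {G : SimpleGraph V} [DecidableRel G.Adj]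

lemma exists_forall_adj_of_cliqueDeg_pos {T : Finset V} (h : 0 < cliqueDeg G T) :
    ∃ v, ∀ u ∈ T, G.Adj u v := by
  obtain ⟨v, hv⟩ := card_pos.1 h
  exact ⟨v, (mem_filter.1 hv).2⟩

lemma cliqueDeg_pos_of_forall_adj {T : Finset V} {v : V} (h : ∀ u ∈ T, G.Adj u v) :
    0 < cliqueDeg G T :=
  card_pos.2 ⟨v, mem_filter.2 ⟨mem_univ v, h⟩⟩

lemma cliqueDeg_add_degree_le (T : Finset V) (v : V) :
    cliqueDeg G T + G.degree v ≤ cliqueDeg G (insert v T) + Fintype.card V := by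
  set A := univ.filter fun w => ∀ u ∈ T, G.Adj u w
  have hinsert : univ.filter (fun w => ∀ u ∈ insert v T, G.Adj u w) = A ∩ G.neighborFinset v := by
    ext w
    simp [A, and_comm]
  calc cliqueDeg G T + G.degree v
      = #(A ∩ G.neighborFinset v) + #(A ∪ G.neighborFinset v) :=
        (card_inter_add_card_union _ _).symm
    _ ≤ cliqueDeg G (insert v T) + Fintype.card V := by
        rw [cliqueDeg, hinsert]
        exact Nat.add_le_add_left (card_le_univ _) _

theorem exists_isClique_card_eq_of_lt_cliqueDeg {β : ℝ} (hβ : 0 ≤ β)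
    (hδ : ∀ v, (1 - β) * Fintype.card V ≤ G.degree v) (k : ℕ) {T : Finset V}
    (hT : G.IsClique (T : Set V)) (hk : k * β * Fintype.card V < cliqueDeg G T) :
    ∃ S : Finset V, G.IsClique (S : Set V) ∧ #S = #T + (k + 1) := by
  obtain ⟨v, hv⟩ := exists_forall_adj_of_cliqueDeg_pos (G := G) (T := T) <| by
    exact_mod_cast (by positivity : (0 : ℝ) ≤ k * β * Fintype.card V).trans_lt hk
  have hvT : v ∉ T := fun h => G.irrefl (hv v h)
  have hTv : G.IsClique (insert v T : Set V) := hT.insert fun u hu _ => (hv u hu).symm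
  have hcard : #(insert v T) = #T + 1 := card_insert_of_notMem hvT
  cases k with
  | zero => exact ⟨insert v T, by rwa [coe_insert], hcard⟩
  | succ k =>
    have hstep : (cliqueDeg G T + G.degree v : ℝ) ≤ cliqueDeg G (insert v T) + Fintype.card V := by
      exact_mod_cast cliqueDeg_add_degree_le T v
    have hk' : k * β * Fintype.card V < cliqueDeg G (insert v T) := by
      push_cast at hk
      linarith [hδ v]
    obtain ⟨S, hS, hSc⟩ :=
      exists_isClique_card_eq_of_lt_cliqueDeg hβ hδ k (by rwa [coe_insert]) hk'
    exact ⟨S, hS, by rw [hSc, hcard]; ring⟩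

variable {n p : ℕ} {β : ℝ} {U : Finset V}

lemma Dplus_eq_zero_of_cliqueDeg_le (hc : 0 ≤ ((p : ℝ) - #U + 1) * β)
    (h : (cliqueDeg G U : ℝ) ≤ ((p : ℝ) - #U + 1) * β * n) : Dplus G n p β U = 0 := by
  rw [Dplus, max_eq_left_iff, sub_nonpos]
  rcases n.eq_zero_or_pos with rfl | hn
  · simpa using hc
  · rwa [div_le_iff₀ (by exact_mod_cast hn)]

lemma cliqueDeg_le_of_Dplus_eq_zero (hn : 0 < n) (h : Dplus G n p β U = 0) :
    (cliqueDeg G U : ℝ) ≤ ((p : ℝ) - #U + 1) * β * n := by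
  rwa [Dplus, max_eq_left_iff, sub_nonpos, div_le_iff₀ (by exact_mod_cast hn)] at h

end

theorem stmt_8_general {V : Type*} [Fintype V] [DecidableEq V] (n : ℕ)
    (hV : Fintype.card V = n) (G : SimpleGraph V) [DecidableRel G.Adj]
    (β : ℝ) (hβ0 : 0 < β) (p : ℕ)
    (hδ : ∀ v : V, (1 - β) * n ≤ (G.degree v : ℝ)) :
    G.CliqueFree (p + 2) ↔
      ∀ T : Finset V, G.IsClique (T : Set V) → T.card ≤ p + 1 →
        Dplus G n p β T = 0 := by
  subst hV
  constructor
  · intro hfree T hT hTp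
    have hk : ((p + 1 - #T : ℕ) : ℝ) = p - #T + 1 := by
      push_cast [Nat.cast_sub hTp]
      ring
    refine Dplus_eq_zero_of_cliqueDeg_le (by rw [← hk]; positivity) (not_lt.1 fun hlt => ?_)
    obtain ⟨S, hS, hSc⟩ :=
      exists_isClique_card_eq_of_lt_cliqueDeg hβ0.le hδ (p + 1 - #T) hT (by rwa [hk])
    exact hfree S ⟨hS, by omega⟩
  · intro hfree S hS
    obtain ⟨v, hv⟩ : S.Nonempty := card_pos.1 (by rw [hS.card_eq]; omega)
    have hT : #(S.erase v) = p + 1 := by rw [card_erase_of_mem hv, hS.card_eq]; rfl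
    have hd := cliqueDeg_le_of_Dplus_eq_zero (Fintype.card_pos_iff.2 ⟨v⟩)
      (hfree _ (hS.isClique.subset (coe_subset.2 (erase_subset v S))) hT.le)
    have hpos : (0 : ℝ) < cliqueDeg G (S.erase v) := by
      exact_mod_cast cliqueDeg_pos_of_forall_adj fun u hu =>
        hS.isClique (mem_of_mem_erase hu) hv (ne_of_mem_erase hu)
    rw [hT] at hd
    push_cast at hd
    linarith

theorem stmt_8 {V : Type*} [Fintype V] [DecidableEq V] (n : ℕ)
    (hV : Fintype.card V = n) (G : SimpleGraph V) [DecidableRel G.Adj]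
    (β : ℝ) (hβ0 : 0 < β) (hβ1 : β < 1) (p : ℕ) (hp : p = ⌈1 / β⌉₊ - 1)
    (hδ : ∀ v : V, (1 - β) * n ≤ (G.degree v : ℝ)) :
    G.CliqueFree (p + 2) ↔
      ∀ T : Finset V, G.IsClique (T : Set V) → T.card ≤ p + 1 →
        Dplus G n p β T = 0 :=
  stmt_8_general n hV G β hβ0 p hδ
end

section
/- Let 0 < β < 1 and let G be a graph on n vertices with minimum degree at least (1−β)n. For integers 2 ≤ t < s and any s-clique S of G: ∑_{T} d(T) ≥ ((1−β)·s·C(s−2,t−1) − (t−1)·C(s−1,t))·n + C(s−2,t−2)·d(S), where the sum is over all t-cliques T contained in S and d(U) is the number of common neighbours of the clique U. -/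
lemma aux_choose (m t : ℕ) : ∀ d, (m + d).choose (t+1) ≤ m.choose (t+1) + d * (m + d - 1).choose t := by
  intro d
  induction d with
  | zero => simp
  | succ d ih =>
    have h1 : (m + (d+1)).choose (t+1) = (m+d).choose t + (m+d).choose (t+1) := by
      rw [show m + (d+1) = (m+d)+1 by omega]
      exact Nat.choose_succ_succ _ _
    have h2 : (m + d - 1).choose t ≤ (m+d).choose t := Nat.choose_le_choose _ (by omega)
    have h3 : m + (d+1) - 1 = m + d := by omega
    have h4 := Nat.mul_le_mul_left d h2
    calc (m+(d+1)).choose (t+1) = (m+d).choose t + (m+d).choose (t+1) := h1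
      _ ≤ (m+d).choose t + (m.choose (t+1) + d * (m+d-1).choose t) := Nat.add_le_add_left ih _
      _ ≤ (m+d).choose t + (m.choose (t+1) + d * (m+d).choose t) := by omega
      _ = m.choose (t+1) + (d+1) * (m+(d+1)-1).choose t := by rw [h3]; ring

theorem stmt_9 {V : Type*} [Fintype V] [DecidableEq V] (n : ℕ)
    (hV : Fintype.card V = n) (G : SimpleGraph V) [DecidableRel G.Adj]
    (β : ℝ) (hβ0 : 0 < β) (hβ1 : β < 1)
    (hδ : ∀ v : V, (1 - β) * n ≤ (G.degree v : ℝ))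
    (S : Finset V) (s t : ℕ) (hS : G.IsNClique s S) (ht : 2 ≤ t) (hts : t < s) :
    ((1 - β) * s * (Nat.choose (s - 2) (t - 1) : ℝ)
          - ((t : ℝ) - 1) * (Nat.choose (s - 1) t : ℝ)) * n
        + (Nat.choose (s - 2) (t - 2) : ℝ) * (cliqueDeg G S : ℝ)
      ≤ ∑ T ∈ S.powersetCard t, (cliqueDeg G T : ℝ) := by
  classical
  obtain ⟨t', rfl⟩ : ∃ t', t = t' + 2 := ⟨t - 2, by omega⟩
  obtain ⟨s', rfl⟩ : ∃ s', s = s' + 2 := ⟨s - 2, by omega⟩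
  have hsub1 : s' + 2 - 2 = s' := by omega
  have hsub2 : s' + 2 - 1 = s' + 1 := by omega
  have hsub3 : t' + 2 - 1 = t' + 1 := by omega
  have hsub4 : t' + 2 - 2 = t' := by omega
  rw [hsub1, hsub2, hsub3, hsub4]
  have hScard : S.card = s' + 2 := hS.2
  set m : V → ℕ := fun v => (S.filter (fun u => G.Adj u v)).card with hm
  set C1 : ℝ := (s'.choose (t'+1) : ℝ) with hC1def
  set C2 : ℝ := ((s'+1).choose (t'+2) : ℝ) with hC2def
  set C3 : ℝ := (s'.choose t' : ℝ) with hC3def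
  -- Step A: the sum over t-subsets equals a vertex sum
  have hA : (∑ T ∈ S.powersetCard (t'+2), (cliqueDeg G T : ℕ)) =
      ∑ v : V, ((m v).choose (t'+2)) := by
    unfold cliqueDeg
    simp_rw [Finset.card_filter]
    rw [Finset.sum_comm]
    refine Finset.sum_congr rfl fun v _ => ?_
    have hfe : Finset.filter (fun T => ∀ u ∈ T, G.Adj u v) (S.powersetCard (t'+2))
        = (S.filter (fun u => G.Adj u v)).powersetCard (t'+2) := by
      ext T
      simp only [Finset.mem_filter, Finset.mem_powersetCard]
      constructor
      · rintro ⟨⟨hTS, hTc⟩, hadj⟩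
        exact ⟨fun x hx => Finset.mem_filter.2 ⟨hTS hx, hadj x hx⟩, hTc⟩
      · rintro ⟨hTS, hTc⟩
        exact ⟨⟨fun x hx => (Finset.mem_filter.1 (hTS hx)).1, hTc⟩,
          fun x hx => (Finset.mem_filter.1 (hTS hx)).2⟩
    rw [← Finset.card_powersetCard, ← hfe, Finset.card_filter]
  -- pointwise key inequality
  have key : ∀ v : V, C1 * (m v) - (s'+1) * C1 + C2 +
      (if (∀ u ∈ S, G.Adj u v) then C3 else 0) ≤ ((m v).choose (t'+2) : ℝ) := by
    intro v
    by_cases hv : ∀ u ∈ S, G.Adj u v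
    · rw [if_pos hv]
      have hmv : m v = s' + 2 := by
        have hfe : S.filter (fun u => G.Adj u v) = S := Finset.filter_eq_self.2 hv
        simp [hm, hfe, hScard]
      rw [hmv]
      have hp : (s'+2).choose (t'+2) = (s'+1).choose (t'+2) + (s'.choose (t'+1) + s'.choose t') := by
        rw [Nat.choose_succ_succ (s'+1) (t'+1), Nat.choose_succ_succ s' t']
        simp only [Nat.succ_eq_add_one, show t'+1+1 = t'+2 by omega]
        omega
      apply le_of_eq
      rw [hp, hC1def, hC2def, hC3def]
      push_cast
      ring
    · rw [if_neg hv, add_zero]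
      have hlt : m v < s' + 2 := by
        push_neg at hv
        obtain ⟨u, hu, huv⟩ := hv
        have hsub : S.filter (fun u => G.Adj u v) ⊂ S := Finset.filter_ssubset.2 ⟨u, hu, huv⟩
        have := Finset.card_lt_card hsub
        have hmv' : m v = (Finset.filter (fun u => G.Adj u v) S).card := rfl
        omega
      obtain ⟨d, hd⟩ : ∃ d, s' + 1 = m v + d := ⟨s' + 1 - m v, by omega⟩
      have hn := aux_choose (m v) (t'+1) d
      have h4 : m v + d - 1 = s' := by omega
      rw [h4, ← hd] at hn
      have hnr : C2 ≤ ((m v).choose (t'+2) : ℝ) + d * C1 := by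
        rw [hC2def, hC1def]
        exact_mod_cast hn
      have hdr : (d : ℝ) = (s'+1 : ℝ) - (m v : ℝ) := by
        have : ((s':ℝ) + 1) = (m v : ℝ) + d := by exact_mod_cast congrArg (Nat.cast : ℕ → ℝ) hd
        linarith
      have : (d : ℝ) * C1 = ((s'+1 : ℝ) - (m v : ℝ)) * C1 := by rw [hdr]
      linarith
  -- sum of m v equals sum of degrees
  have hdeg : ∑ v : V, m v = ∑ u ∈ S, G.degree u := by
    simp only [hm, Finset.card_filter]
    rw [Finset.sum_comm]
    refine Finset.sum_congr rfl fun u hu => ?_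
    rw [← Finset.card_filter]
    rw [← SimpleGraph.neighborFinset_eq_filter]
    rfl
  have hMn : ((s':ℝ)+2) * ((1-β) * n) ≤ ∑ v : V, (m v : ℝ) := by
    have h1 : ∑ v : V, (m v : ℝ) = ∑ u ∈ S, (G.degree u : ℝ) := by
      exact_mod_cast congrArg (Nat.cast : ℕ → ℝ) hdeg
    rw [h1]
    calc ((s':ℝ)+2) * ((1-β) * n) = ∑ _u ∈ S, (1-β) * n := by
          rw [Finset.sum_const, hScard]; push_cast; ring
      _ ≤ ∑ u ∈ S, (G.degree u : ℝ) := Finset.sum_le_sum fun u _ => hδ u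
  -- sum the key inequality
  have hsum := Finset.sum_le_sum (fun v (_ : v ∈ Finset.univ) => key v)
  rw [Finset.sum_add_distrib] at hsum
  have hite : ∑ v : V, (if (∀ u ∈ S, G.Adj u v) then C3 else 0) = C3 * (cliqueDeg G S : ℝ) := by
    rw [← Finset.sum_filter, Finset.sum_const]
    unfold cliqueDeg
    rw [nsmul_eq_mul, mul_comm]
  have hconst : ∑ v : V, (C1 * (m v) - (s'+1) * C1 + C2) =
      C1 * (∑ v : V, (m v : ℝ)) - (n : ℝ) * ((s'+1) * C1) + n * C2 := by
    rw [Finset.sum_add_distrib, Finset.sum_sub_distrib, ← Finset.mul_sum, Finset.sum_const,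
      Finset.sum_const, Finset.card_univ, hV, nsmul_eq_mul, nsmul_eq_mul]
  rw [hite, hconst] at hsum
  -- the binomial identity
  have hid : ((s':ℝ)+1) * C1 = ((t':ℝ)+2) * C2 := by
    have hnat : (s'+1) * s'.choose (t'+1) = (s'+1).choose (t'+2) * (t'+2) :=
      Nat.add_one_mul_choose_eq s' (t'+1)
    have hc := congrArg (Nat.cast : ℕ → ℝ) hnat
    push_cast at hc
    rw [hC1def, hC2def]
    linarith
  have hC1nn : 0 ≤ C1 := by rw [hC1def]; positivity
  have hRHS : ∑ v : V, (((m v).choose (t'+2)) : ℝ) = ∑ T ∈ S.powersetCard (t'+2), (cliqueDeg G T : ℝ) := by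
    exact_mod_cast (congrArg (Nat.cast : ℕ → ℝ) hA).symm
  rw [hRHS] at hsum
  have hmul : C1 * (((s':ℝ)+2) * ((1-β) * n)) ≤ C1 * (∑ v : V, (m v : ℝ)) :=
    mul_le_mul_of_nonneg_left hMn hC1nn
  push_cast
  nlinarith [hsum, hmul, hid]
end

section
/- Let 0 < β < 1 and let G be a graph on n vertices with minimum degree at least (1−β)n. For any (t+1)-clique S with t ≥ 2: ∑_{T} d(T) ≥ (2−(t+1)β)·n + (t−1)·d(S), where the sum is over all t-cliques T contained in S. -/
open Finset

theorem Finset.filter_powersetCard_forall {α : Type*} (s : Finset α) (k : ℕ) (p : α → Prop)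
    [DecidablePred p] [DecidablePred fun t : Finset α => ∀ a ∈ t, p a] :
    (s.powersetCard k).filter (fun t => ∀ a ∈ t, p a) = (s.filter p).powersetCard k := by
  ext t
  simp only [mem_filter, mem_powersetCard, subset_iff]
  grind

namespace SimpleGraph

variable {V : Type*} [Fintype V] [DecidableEq V] (G : SimpleGraph V) [DecidableRel G.Adj]

lemma cliqueDeg_singleton (u : V) : cliqueDeg G {u} = G.degree u := by
  simp [cliqueDeg, ← card_neighborFinset_eq_degree, neighborFinset_eq_filter]

lemma sum_cliqueDeg_powersetCard (S : Finset V) (k : ℕ) :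
    ∑ T ∈ S.powersetCard k, cliqueDeg G T = ∑ x, (#{u ∈ S | G.Adj u x}).choose k := by
  refine (sum_card_bipartiteAbove_eq_sum_card_bipartiteBelow
    (r := fun T x => ∀ u ∈ T, G.Adj u x)).trans (sum_congr rfl fun x _ => ?_)
  rw [bipartiteBelow, filter_powersetCard_forall, card_powersetCard]

lemma sum_degree_eq_sum_card_adj (S : Finset V) :
    ∑ u ∈ S, G.degree u = ∑ x, #{u ∈ S | G.Adj u x} := by
  simpa [powersetCard_one, cliqueDeg_singleton] using sum_cliqueDeg_powersetCard G S 1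

lemma cliqueDeg_eq_sum_choose (S : Finset V) :
    cliqueDeg G S = ∑ x, (#{u ∈ S | G.Adj u x}).choose #S := by
  simpa [powersetCard_self] using sum_cliqueDeg_powersetCard G S #S

end SimpleGraph

lemma Nat.cast_add_mul_choose_succ_le_choose_add (a t : ℕ) (ha : a ≤ t + 1) :
    (a : ℝ) + (t - 1) * a.choose (t + 1) ≤ a.choose t + (t - 1) := by
  rcases ha.eq_or_lt with rfl | ha
  · simp [Nat.choose_succ_self_right]
  rcases (Nat.lt_succ_iff.mp ha).eq_or_lt with rfl | ha
  · simp
  have : (a : ℝ) + 1 ≤ t := by exact_mod_cast ha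
  simp [Nat.choose_eq_zero_of_lt ha, Nat.choose_eq_zero_of_lt (ha.trans t.lt_succ_self)]
  linarith

open SimpleGraph in
theorem stmt_10_general {V : Type*} [Fintype V] [DecidableEq V] (n : ℕ)
    (hV : Fintype.card V = n) (G : SimpleGraph V) [DecidableRel G.Adj]
    (β : ℝ)
    (hδ : ∀ v : V, (1 - β) * n ≤ (G.degree v : ℝ))
    (S : Finset V) (t : ℕ) (hS : G.IsNClique (t + 1) S) :
    (2 - ((t : ℝ) + 1) * β) * n + ((t : ℝ) - 1) * (cliqueDeg G S : ℝ)
      ≤ ∑ T ∈ S.powersetCard t, (cliqueDeg G T : ℝ) := by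
  have hcard : #S = t + 1 := hS.card_eq
  have hdeg : (t + 1) * ((1 - β) * n) ≤ ∑ u ∈ S, (G.degree u : ℝ) := by
    simpa [hcard] using card_nsmul_le_sum S _ _ fun u _ => hδ u
  have hpointwise : ∑ x, ((#{u ∈ S | G.Adj u x} : ℝ)
        + (t - 1) * (#{u ∈ S | G.Adj u x}).choose (t + 1))
      ≤ ∑ x, (((#{u ∈ S | G.Adj u x}).choose t : ℝ) + (t - 1)) :=
    sum_le_sum fun _ _ =>
      Nat.cast_add_mul_choose_succ_le_choose_add _ _ (hcard ▸ card_filter_le _ _)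
  have hdeg_sum : ∑ u ∈ S, (G.degree u : ℝ) = ∑ x, (#{u ∈ S | G.Adj u x} : ℝ) := by
    exact_mod_cast sum_degree_eq_sum_card_adj G S
  have hS_sum : (cliqueDeg G S : ℝ) = ∑ x, ((#{u ∈ S | G.Adj u x}).choose (t + 1) : ℝ) := by
    rw [← hcard]
    exact_mod_cast cliqueDeg_eq_sum_choose G S
  have hT_sum : ∑ T ∈ S.powersetCard t, (cliqueDeg G T : ℝ)
      = ∑ x, ((#{u ∈ S | G.Adj u x}).choose t : ℝ) := by
    exact_mod_cast sum_cliqueDeg_powersetCard G S t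
  rw [sum_add_distrib, sum_add_distrib, ← mul_sum, sum_const, card_univ, hV, nsmul_eq_mul]
    at hpointwise
  rw [hT_sum, hS_sum]
  linarith

theorem stmt_10 {V : Type*} [Fintype V] [DecidableEq V] (n : ℕ)
    (hV : Fintype.card V = n) (G : SimpleGraph V) [DecidableRel G.Adj]
    (β : ℝ) (hβ0 : 0 < β) (hβ1 : β < 1)
    (hδ : ∀ v : V, (1 - β) * n ≤ (G.degree v : ℝ))
    (S : Finset V) (t : ℕ) (hS : G.IsNClique (t + 1) S) (ht : 2 ≤ t) :
    (2 - ((t : ℝ) + 1) * β) * n + ((t : ℝ) - 1) * (cliqueDeg G S : ℝ)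
      ≤ ∑ T ∈ S.powersetCard t, (cliqueDeg G T : ℝ) :=
  stmt_10_general n hV G β hδ S t hS
end

section
/- Let 0 < β < 1, δ(G) ≥ (1−β)n, and let S be a (t+1)-clique of G with t ≥ 2. If ∑_{T ⊆ S, |T|=t} d(T) = (2−(t+1)β)·n + (t−1)·d(S), then every vertex v of S has degree exactly (1−β)n. -/
open Finset

lemma choose_key (t k : ℕ) (ht : 1 ≤ t) (hk : k ≤ t + 1) :
    (k : ℤ) - ((t : ℤ) - 1) + ((t : ℤ) - 1) * (if k = t + 1 then 1 else 0)
      ≤ (k.choose t : ℤ) := by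
  rcases eq_or_ne k (t+1) with h | h
  · subst h
    rw [Nat.choose_succ_self_right]
    simp only [if_pos rfl, mul_one]
    push_cast; omega
  · simp only [h, if_false, mul_zero, add_zero]
    rcases eq_or_ne k t with h2 | h2
    · subst h2; rw [Nat.choose_self]; push_cast; omega
    · have hlt : k < t := by omega
      rw [Nat.choose_eq_zero_of_lt hlt]
      push_cast; omega

theorem stmt_11 {V : Type*} [Fintype V] [DecidableEq V] (n : ℕ)
    (hV : Fintype.card V = n) (G : SimpleGraph V) [DecidableRel G.Adj]
    (β : ℝ) (hβ0 : 0 < β) (hβ1 : β < 1)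
    (hδ : ∀ v : V, (1 - β) * n ≤ (G.degree v : ℝ))
    (S : Finset V) (t : ℕ) (hS : G.IsNClique (t + 1) S) (ht : 2 ≤ t)
    (heq : ∑ T ∈ S.powersetCard t, (cliqueDeg G T : ℝ)
      = (2 - ((t : ℝ) + 1) * β) * n + ((t : ℝ) - 1) * (cliqueDeg G S : ℝ)) :
    ∀ v ∈ S, (G.degree v : ℝ) = (1 - β) * n := by
  classical
  set A : V → Finset V := fun w => S.filter (fun u => G.Adj u w) with hA
  have hAsub : ∀ w, A w ⊆ S := fun w => filter_subset _ _
  have hAcard : ∀ w, (A w).card ≤ t + 1 := fun w => by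
    simpa [hS.2] using card_le_card (hAsub w)
  -- Step 1
  have step1 : ∑ T ∈ S.powersetCard t, cliqueDeg G T
      = ∑ w : V, ((A w).card.choose t) := by
    simp only [cliqueDeg, card_filter]
    rw [Finset.sum_comm]
    refine Finset.sum_congr rfl fun w _ => ?_
    rw [← card_filter]
    have : (S.powersetCard t).filter (fun T => ∀ u ∈ T, G.Adj u w)
        = (A w).powersetCard t := by
      ext T
      simp only [mem_filter, mem_powersetCard, hA, subset_iff, Finset.mem_filter]
      constructor
      · rintro ⟨⟨hTS, hTc⟩, hadj⟩
        exact ⟨fun x hx => ⟨hTS hx, hadj x hx⟩, hTc⟩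
      · rintro ⟨hsub, hTc⟩
        exact ⟨⟨fun x hx => (hsub hx).1, hTc⟩, fun x hx => (hsub hx).2⟩
    rw [this, Finset.card_powersetCard]
  -- Step 2
  have step2 : ∑ w : V, (A w).card = ∑ u ∈ S, G.degree u := by
    simp only [hA, card_filter]
    rw [Finset.sum_comm]
    refine Finset.sum_congr rfl fun u _ => ?_
    rw [← card_filter, SimpleGraph.degree]
    congr 1
    ext w
    simp [SimpleGraph.mem_neighborFinset]
  -- Step 3
  have step3 : cliqueDeg G S
      = (Finset.univ.filter (fun w => (A w).card = t + 1)).card := by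
    unfold cliqueDeg
    congr 1
    ext w
    simp only [Finset.mem_filter, Finset.mem_univ, true_and]
    constructor
    · intro h
      have : A w = S := filter_eq_self.mpr h
      rw [this, hS.2]
    · intro h
      have : A w = S := Finset.eq_of_subset_of_card_le (hAsub w) (by rw [h, hS.2])
      intro u hu
      have : u ∈ A w := this ▸ hu
      exact (mem_filter.mp this).2
  -- Integer inequality
  have key : (∑ u ∈ S, (G.degree u : ℤ)) - ((t:ℤ) - 1) * n + ((t:ℤ) - 1) * (cliqueDeg G S)
      ≤ ∑ T ∈ S.powersetCard t, (cliqueDeg G T : ℤ) := by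
    calc (∑ u ∈ S, (G.degree u : ℤ)) - ((t:ℤ) - 1) * n + ((t:ℤ) - 1) * (cliqueDeg G S)
        = ∑ w : V, (((A w).card : ℤ) - ((t:ℤ) - 1)
            + ((t:ℤ) - 1) * (if (A w).card = t + 1 then 1 else 0)) := by
          rw [Finset.sum_add_distrib, Finset.sum_sub_distrib, ← Finset.mul_sum,
            Finset.sum_boole]
          have hs2 : (∑ w : V, ((A w).card : ℤ)) = ∑ u ∈ S, (G.degree u : ℤ) := by
            exact_mod_cast step2
          have hs3 : ((Finset.univ.filter (fun w => (A w).card = t + 1)).card : ℤ)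
              = (cliqueDeg G S : ℤ) := by rw [step3]
          rw [hs2]
          simp only [Finset.sum_const, Finset.card_univ, hV, nsmul_eq_mul]
          rw [show ((Finset.filter (fun x => (A x).card = t + 1) Finset.univ).card : ℤ) = (cliqueDeg G S : ℤ) from hs3]
          ring
      _ ≤ ∑ w : V, (((A w).card.choose t : ℤ)) := by
          refine Finset.sum_le_sum fun w _ => ?_
          exact choose_key t _ (by omega) (hAcard w)
      _ = ∑ T ∈ S.powersetCard t, (cliqueDeg G T : ℤ) := by
          exact_mod_cast step1.symm
  -- Real version and conclusion
  have keyR : (∑ u ∈ S, (G.degree u : ℝ)) - ((t:ℝ) - 1) * n + ((t:ℝ) - 1) * (cliqueDeg G S)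
      ≤ ∑ T ∈ S.powersetCard t, (cliqueDeg G T : ℝ) := by
    have h' : (((∑ u ∈ S, (G.degree u : ℤ)) - ((t:ℤ) - 1) * n
          + ((t:ℤ) - 1) * (cliqueDeg G S) : ℤ) : ℝ)
        ≤ ((∑ T ∈ S.powersetCard t, (cliqueDeg G T : ℤ) : ℤ) : ℝ) := by
      exact_mod_cast key
    push_cast at h'
    linarith [h']
  have hsum_le : ∑ u ∈ S, (G.degree u : ℝ) ≤ ((t:ℝ) + 1) * ((1 - β) * n) := by
    rw [heq] at keyR
    nlinarith [keyR]
  intro v hv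
  have hlow := hδ v
  have hrest : (t : ℝ) * ((1 - β) * n) ≤ ∑ u ∈ S.erase v, (G.degree u : ℝ) := by
    have hc : (S.erase v).card = t := by rw [Finset.card_erase_of_mem hv, hS.2]; omega
    calc (t : ℝ) * ((1 - β) * n) = ∑ _u ∈ S.erase v, (1 - β) * n := by
          rw [Finset.sum_const, hc, nsmul_eq_mul]
      _ ≤ ∑ u ∈ S.erase v, (G.degree u : ℝ) := Finset.sum_le_sum fun u _ => hδ u
  have hsplit : ∑ u ∈ S, (G.degree u : ℝ)
      = (G.degree v : ℝ) + ∑ u ∈ S.erase v, (G.degree u : ℝ) :=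
    (Finset.add_sum_erase _ _ hv).symm
  rw [hsplit] at hsum_le
  nlinarith [hsum_le, hrest, hlow]
end

section
/- Let 0 < β < 1, p = ⌈1/β⌉ − 1, and let G be a graph on n vertices with minimum degree at least (1−β)n. For integers 2 ≤ t < s ≤ p+1 and any s-clique S: ∑_{T} D_−(T) ≥ (1−β)·s·C(s−2,t−1) − (t−1)·C(s−1,t) + C(s−2,t−2)·D_−(S), where the sum is over all t-cliques T ⊆ S and D_−(U) = min{d(U)/n, (p−|U|+1)β}. -/
/-- `D_-(U) = min {d(U)/n, (p - |U| + 1)β}`. -/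
noncomputable def Dminus {V : Type*} [Fintype V] [DecidableEq V] (G : SimpleGraph V)
    [DecidableRel G.Adj] (n p : ℕ) (β : ℝ) (U : Finset V) : ℝ :=
  min ((cliqueDeg G U : ℝ) / n) (((p : ℝ) - U.card + 1) * β)

open Finset

-- The coefficients of the claim for `(s, t) = (b + k + 2, b + 2)`, with `x` standing for `D_-(S)`,
-- satisfy this recurrence in `k`; it is what closes the induction step.
theorem choose_bound_recurrence (b k : ℕ) (β x : ℝ) :
    (b + k + 3 : ℝ) * ((1 - β) * (b + k + 2) * (b + k).choose (b + 1)
        - (b + 1) * (b + k + 1).choose (b + 2))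
      + (b + k).choose b * ((b + k + 1) * x + 2 - (b + k + 3) * β)
    = (k + 1) * ((1 - β) * (b + k + 3) * (b + k + 1).choose (b + 1)
        - (b + 1) * (b + k + 2).choose (b + 2) + (b + k + 1).choose b * x) := by
  have pascal₁ := Nat.choose_succ_succ (b + k) b
  have pascal₂ := Nat.choose_succ_succ (b + k + 1) (b + 1)
  have ratio₁ := Nat.choose_succ_right_eq (b + k) b
  have ratio₂ := Nat.choose_succ_right_eq (b + k + 1) (b + 1)
  have ratio₃ := Nat.choose_mul_succ_eq (b + k) b
  simp only [Nat.succ_eq_add_one, show b + k - b = k by omega,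
    show b + k + 1 - (b + 1) = k by omega, show b + k + 1 - b = k + 1 by omega] at *
  rw [show b + k + 2 = b + k + 1 + 1 by ring, show b + 2 = b + 1 + 1 by ring, pascal₂, pascal₁]
  rw [pascal₁] at ratio₂
  apply_fun ((↑) : ℕ → ℝ) at ratio₁ ratio₂ ratio₃
  push_cast at *
  linear_combination x * ratio₃ + ((b + k + 4 : ℝ) - β * (b + k + 3)) * ratio₁ - (b + 1) * ratio₂

theorem Finset.sum_sum_powersetCard_erase {α M : Type*} [DecidableEq α] [AddCommMonoid M]
    (S : Finset α) (t : ℕ) (f : Finset α → M) :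
    ∑ v ∈ S, ∑ T ∈ (S.erase v).powersetCard t, f T = (#S - t) • ∑ T ∈ S.powersetCard t, f T := by
  have h : ∀ v, (S.erase v).powersetCard t = {T ∈ S.powersetCard t | v ∉ T} := by
    intro v; ext T
    simp only [mem_powersetCard, mem_filter, subset_erase]
    tauto
  simp only [h, sum_filter]
  rw [sum_comm, smul_sum]
  refine sum_congr rfl fun T hT => ?_
  obtain ⟨hTS, hTt⟩ := mem_powersetCard.1 hT
  rw [← sum_filter, sum_const, filter_not, filter_mem_eq_inter, inter_eq_right.2 hTS,
    card_sdiff_of_subset hTS, hTt]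

theorem Finset.ite_le_card_filter_forall_erase_add_card_filter_not {α : Type*} [DecidableEq α]
    (S : Finset α) (P : α → Prop) [DecidablePred P] [Decidable (∀ u ∈ S, P u)]
    [DecidablePred fun v => ∀ u ∈ S.erase v, P u] :
    (if ∀ u ∈ S, P u then #S else 2) ≤ #{v ∈ S | ∀ u ∈ S.erase v, P u} + #{u ∈ S | ¬ P u} := by
  split_ifs with hP
  · rw [filter_true_of_mem fun v _ u hu => hP u (mem_of_mem_erase hu)]
    omega
  · push Not at hP
    obtain ⟨u₀, hu₀, hPu₀⟩ := hP
    have hu₀' : u₀ ∈ {u ∈ S | ¬ P u} := mem_filter.2 ⟨hu₀, hPu₀⟩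
    have hpos : 0 < #{u ∈ S | ¬ P u} := card_pos.2 ⟨u₀, hu₀'⟩
    by_cases htwo : 2 ≤ #{u ∈ S | ¬ P u}
    · omega
    have honly : ∀ u ∈ S.erase u₀, P u := fun u hu => by
      by_contra hPu
      exact (mem_erase.1 hu).1
        (card_le_one.1 (by omega) u (mem_filter.2 ⟨mem_of_mem_erase hu, hPu⟩) u₀ hu₀')
    have : 0 < #{v ∈ S | ∀ u ∈ S.erase v, P u} := card_pos.2 ⟨u₀, mem_filter.2 ⟨hu₀, honly⟩⟩
    omega

theorem min_le_sum_min {ι : Type*} (S : Finset ι) (x : ι → ℝ) {c e L : ℝ} (he : 0 ≤ e)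
    (hLc : L ≤ c) (hx_le : ∀ v ∈ S, x v ≤ c + e) (hx_ge : ∀ v ∈ S, L ≤ x v) :
    min (∑ v ∈ S, x v - (#S - 2) * e) ((#S - 1) * c + L) ≤ ∑ v ∈ S, min (x v) c := by
  classical
  by_cases hfew : #{v ∈ S | c < x v} + 2 ≤ #S
  · have hpt : ∀ v ∈ S, x v - (if c < x v then e else 0) ≤ min (x v) c := by
      intro v hv
      split_ifs with h
      · rw [min_eq_right h.le]; linarith [hx_le v hv]
      · rw [min_eq_left (not_lt.1 h)]; simp
    have hsum := sum_le_sum hpt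
    rw [sum_sub_distrib, ← sum_filter, sum_const, nsmul_eq_mul] at hsum
    have : (#{v ∈ S | c < x v} : ℝ) + 2 ≤ #S := by exact_mod_cast hfew
    refine (min_le_left _ _).trans (le_trans ?_ hsum)
    nlinarith
  · have hpt : ∀ v ∈ S, (if c < x v then c else L) ≤ min (x v) c := by
      intro v hv
      split_ifs with h
      · rw [min_eq_right h.le]
      · exact le_min (hx_ge v hv) hLc
    have hsum := sum_le_sum hpt
    rw [sum_ite, sum_const, sum_const, nsmul_eq_mul, nsmul_eq_mul] at hsum
    have hK : (#{v ∈ S | c < x v} : ℝ) + #{v ∈ S | ¬ c < x v} = #S := by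
      exact_mod_cast card_filter_add_card_filter_not _
    have hmany : (#S : ℝ) ≤ #{v ∈ S | c < x v} + 1 := by exact_mod_cast (by omega)
    refine (min_le_right _ _).trans (le_trans ?_ hsum)
    nlinarith [mul_le_mul_of_nonneg_right hmany (sub_nonneg.2 hLc), congrArg (· * L) hK]

section

variable {V : Type*} [Fintype V] [DecidableEq V] (G : SimpleGraph V) [DecidableRel G.Adj]

theorem cliqueDeg_erase_le (S : Finset V) (v : V) :
    cliqueDeg G (S.erase v) ≤ cliqueDeg G S + #(G.neighborFinset v)ᶜ := by
  refine (card_le_card fun w hw => ?_).trans (card_union_le _ _)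
  simp only [mem_filter, mem_univ, true_and, mem_union, mem_compl,
    SimpleGraph.mem_neighborFinset] at hw ⊢
  by_cases hvw : G.Adj v w
  · exact .inl fun u hu => if huv : u = v then huv ▸ hvw else hw u (mem_erase.2 ⟨huv, hu⟩)
  · exact .inr hvw

theorem card_le_cliqueDeg_add_sum (T : Finset V) :
    Fintype.card V ≤ cliqueDeg G T + ∑ u ∈ T, #(G.neighborFinset u)ᶜ := by
  rw [← card_univ, ← card_filter_add_card_filter_not (s := univ) fun w => ∀ u ∈ T, G.Adj u w]
  refine add_le_add le_rfl ((card_le_card (t := T.biUnion fun u => (G.neighborFinset u)ᶜ)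
    fun w hw => ?_).trans card_biUnion_le)
  simp only [mem_filter, mem_univ, true_and, not_forall, mem_biUnion, mem_compl,
    SimpleGraph.mem_neighborFinset] at hw ⊢
  obtain ⟨u, hu, h⟩ := hw
  exact ⟨u, hu, h⟩

theorem card_mul_cliqueDeg_add_le (S : Finset V) :
    #S * cliqueDeg G S + 2 * (Fintype.card V - cliqueDeg G S)
      ≤ ∑ v ∈ S, cliqueDeg G (S.erase v) + ∑ u ∈ S, #(G.neighborFinset u)ᶜ := by
  have hcompl : Fintype.card V - cliqueDeg G S = #{w | ¬ ∀ u ∈ S, G.Adj u w} := by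
    rw [cliqueDeg, ← card_univ,
      ← card_filter_add_card_filter_not (s := univ) fun w => ∀ u ∈ S, G.Adj u w]
    omega
  have hswap₁ : ∑ v ∈ S, cliqueDeg G (S.erase v) = ∑ w, #{v ∈ S | ∀ u ∈ S.erase v, G.Adj u w} := by
    simp only [cliqueDeg, card_filter]
    exact sum_comm
  have hswap₂ : ∑ u ∈ S, #(G.neighborFinset u)ᶜ = ∑ w, #{u ∈ S | ¬ G.Adj u w} := by
    calc ∑ u ∈ S, #(G.neighborFinset u)ᶜ = ∑ u ∈ S, #{w | ¬ G.Adj u w} :=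
          sum_congr rfl fun u _ => by congr 1; ext; simp
      _ = _ := by simp only [card_filter]; exact sum_comm
  calc #S * cliqueDeg G S + 2 * (Fintype.card V - cliqueDeg G S)
      = ∑ w, if ∀ u ∈ S, G.Adj u w then #S else 2 := by
        rw [sum_ite, sum_const, sum_const, smul_eq_mul, smul_eq_mul, hcompl, cliqueDeg, mul_comm]
        ring
    _ ≤ _ := sum_le_sum fun w _ =>
        ite_le_card_filter_forall_erase_add_card_filter_not S (G.Adj · w)
    _ = _ := by rw [sum_add_distrib, hswap₁, hswap₂]

theorem card_compl_neighborFinset_le {β : ℝ} (hδ : ∀ v, (1 - β) * Fintype.card V ≤ G.degree v)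
    (v : V) : (#(G.neighborFinset v)ᶜ : ℝ) ≤ β * Fintype.card V := by
  rw [card_compl, Nat.cast_sub (card_le_univ _), G.card_neighborFinset_eq_degree]
  linarith [hδ v]

theorem cliqueDeg_erase_le_add {β : ℝ} (hδ : ∀ v, (1 - β) * Fintype.card V ≤ G.degree v)
    (S : Finset V) (v : V) :
    (cliqueDeg G (S.erase v) : ℝ) ≤ cliqueDeg G S + β * Fintype.card V := by
  have h : (cliqueDeg G (S.erase v) : ℝ) ≤ cliqueDeg G S + #(G.neighborFinset v)ᶜ := by
    exact_mod_cast cliqueDeg_erase_le G S v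
  linarith [card_compl_neighborFinset_le G hδ v]

theorem one_sub_card_mul_le_cliqueDeg {β : ℝ}
    (hδ : ∀ v, (1 - β) * Fintype.card V ≤ G.degree v) (T : Finset V) :
    (1 - #T * β) * Fintype.card V ≤ cliqueDeg G T := by
  have h : (Fintype.card V : ℝ) ≤ cliqueDeg G T + ∑ u ∈ T, (#(G.neighborFinset u)ᶜ : ℝ) := by
    exact_mod_cast card_le_cliqueDeg_add_sum G T
  have hsum : ∑ u ∈ T, (#(G.neighborFinset u)ᶜ : ℝ) ≤ #T * (β * Fintype.card V) :=
    (sum_le_card_nsmul _ _ _ fun u _ => card_compl_neighborFinset_le G hδ u).trans_eq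
      (nsmul_eq_mul _ _)
  linarith

theorem sum_cliqueDeg_erase_ge {β : ℝ} (hδ : ∀ v, (1 - β) * Fintype.card V ≤ G.degree v)
    (S : Finset V) :
    (#S - 2) * cliqueDeg G S + (2 - #S * β) * Fintype.card V
      ≤ ∑ v ∈ S, (cliqueDeg G (S.erase v) : ℝ) := by
  have h : (#S : ℝ) * cliqueDeg G S + 2 * (Fintype.card V - cliqueDeg G S)
      ≤ ∑ v ∈ S, (cliqueDeg G (S.erase v) : ℝ) + ∑ u ∈ S, (#(G.neighborFinset u)ᶜ : ℝ) := by
    have hd : cliqueDeg G S ≤ Fintype.card V := card_le_univ _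
    have h := card_mul_cliqueDeg_add_le G S
    rw [← Nat.cast_le (α := ℝ)] at h
    push_cast [Nat.cast_sub hd] at h
    exact h
  have hsum : ∑ u ∈ S, (#(G.neighborFinset u)ᶜ : ℝ) ≤ #S * (β * Fintype.card V) :=
    (sum_le_card_nsmul _ _ _ fun u _ => card_compl_neighborFinset_le G hδ u).trans_eq
      (nsmul_eq_mul _ _)
  linarith

theorem le_sum_Dminus_erase {β : ℝ} {p : ℕ} (hpβ : 1 ≤ (p + 1) * β)
    (hδ : ∀ v, (1 - β) * Fintype.card V ≤ G.degree v) {S : Finset V} (hS : 2 ≤ #S) :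
    (#S - 2) * Dminus G (Fintype.card V) p β S + 2 - #S * β
      ≤ ∑ v ∈ S, Dminus G (Fintype.card V) p β (S.erase v) := by
  set n := Fintype.card V
  have hn : (0 : ℝ) < n := by
    have : 0 < #S := by omega
    exact_mod_cast this.trans_le (card_le_univ S)
  set D := (cliqueDeg G S : ℝ) / n
  set x : V → ℝ := fun v => (cliqueDeg G (S.erase v) : ℝ) / n
  set c := ((p : ℝ) - #S + 2) * β with hc
  have hS_eq : Dminus G n p β S = min D (c - β) := by
    rw [Dminus]; congr 1; ring
  have herase_eq : ∀ v ∈ S, Dminus G n p β (S.erase v) = min (x v) c := fun v hv => by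
    rw [Dminus, card_erase_of_mem hv, Nat.cast_pred (by omega)]; congr 1; ring
  rw [hS_eq, sum_congr rfl herase_eq]
  set M := min D (c - β)
  have hx_le : ∀ v ∈ S, x v ≤ c + (D - M) := fun v _ => by
    have : x v ≤ D + β := by
      rw [div_add' _ _ _ hn.ne', div_le_div_iff_of_pos_right hn]
      exact cliqueDeg_erase_le_add G hδ S v
    linarith [min_le_right D (c - β)]
  have hx_ge : ∀ v ∈ S, 1 - (#S - 1) * β ≤ x v := fun v hv => by
    have h := one_sub_card_mul_le_cliqueDeg G hδ (S.erase v)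
    rw [card_erase_of_mem hv, Nat.cast_pred (by omega)] at h
    rw [le_div_iff₀ hn]; exact h
  have hsum : (#S - 2) * D + 2 - #S * β ≤ ∑ v ∈ S, x v := by
    have hD : D * n = cliqueDeg G S := div_mul_cancel₀ _ hn.ne'
    rw [← sum_div, le_div_iff₀ hn]
    linear_combination sum_cliqueDeg_erase_ge G hδ S + (#S - 2 : ℝ) * hD
  refine le_trans (le_min ?_ ?_)
    (min_le_sum_min S x (sub_nonneg.2 (min_le_left _ _)) ?_ hx_le hx_ge)
  · linarith
  · have : (0 : ℝ) ≤ #S - 2 := by rw [sub_nonneg]; exact_mod_cast hS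
    nlinarith [mul_le_mul_of_nonneg_left (min_le_right D (c - β)) this]
  · linarith

theorem le_sum_Dminus_powersetCard {β : ℝ} {p : ℕ} (hpβ : 1 ≤ (p + 1) * β)
    (hδ : ∀ v, (1 - β) * Fintype.card V ≤ G.degree v) (b k : ℕ) {S : Finset V}
    (hS : #S = b + k + 2) :
    (1 - β) * (b + k + 2) * (b + k).choose (b + 1) - (b + 1) * (b + k + 1).choose (b + 2)
        + (b + k).choose b * Dminus G (Fintype.card V) p β S
      ≤ ∑ T ∈ S.powersetCard (b + 2), Dminus G (Fintype.card V) p β T := by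
  induction k generalizing S with
  | zero =>
    rw [show S.powersetCard (b + 2) = {S} by rw [← powersetCard_self S, hS]]
    simp
  | succ k ih =>
    have hIH : ∀ v ∈ S, _ := fun v hv =>
      ih (S := S.erase v) (by rw [card_erase_of_mem hv, hS]; omega)
    have hsum := sum_le_sum hIH
    rw [sum_sum_powersetCard_erase, hS, sum_add_distrib, sum_const, ← mul_sum, hS] at hsum
    have hstar := le_sum_Dminus_erase G hpβ hδ (S := S) (by omega)
    rw [hS] at hstar
    have hk : (0 : ℝ) < k + 1 := by positivity
    refine le_of_mul_le_mul_left ?_ hk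
    rw [nsmul_eq_mul, nsmul_eq_mul, show b + (k + 1) + 2 - (b + 2) = k + 1 by omega] at hsum
    have hA := mul_le_mul_of_nonneg_left hstar (Nat.cast_nonneg ((b + k).choose b) : (0 : ℝ) ≤ _)
    have hid := choose_bound_recurrence b k β (Dminus G (Fintype.card V) p β S)
    simp only [← add_assoc] at hsum hA hid ⊢
    push_cast at hsum hA hid ⊢
    linarith

end

theorem stmt_12_general {V : Type*} [Fintype V] [DecidableEq V] (n : ℕ)
    (hV : Fintype.card V = n) (G : SimpleGraph V) [DecidableRel G.Adj]
    (β : ℝ) (hβ0 : 0 < β) (p : ℕ) (hp : p = ⌈1 / β⌉₊ - 1)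
    (hδ : ∀ v : V, (1 - β) * n ≤ (G.degree v : ℝ))
    (S : Finset V) (s t : ℕ) (hS : G.IsNClique s S)
    (ht : 2 ≤ t) (hts : t < s) :
    (1 - β) * s * (Nat.choose (s - 2) (t - 1) : ℝ)
          - ((t : ℝ) - 1) * (Nat.choose (s - 1) t : ℝ)
        + (Nat.choose (s - 2) (t - 2) : ℝ) * Dminus G n p β S
      ≤ ∑ T ∈ S.powersetCard t, Dminus G n p β T := by
  subst hV
  have hpβ : 1 ≤ ((p : ℝ) + 1) * β := by
    have hp1 : (p : ℝ) + 1 = ⌈1 / β⌉₊ := by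
      rw [hp, Nat.cast_sub (Nat.one_le_ceil_iff.2 (by positivity))]
      ring
    rw [hp1, ← div_le_iff₀ hβ0]
    exact Nat.le_ceil _
  obtain ⟨b, rfl⟩ : ∃ b, t = b + 2 := ⟨t - 2, by omega⟩
  obtain ⟨k, rfl⟩ : ∃ k, s = b + k + 2 := ⟨s - (b + 2), by omega⟩
  have h := le_sum_Dminus_powersetCard G hpβ hδ b k hS.card_eq
  rw [show b + k + 2 - 2 = b + k by omega, show b + 2 - 1 = b + 1 by omega,
    show b + k + 2 - 1 = b + k + 1 by omega, show b + 2 - 2 = b by omega]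
  push_cast
  linarith

theorem stmt_12 {V : Type*} [Fintype V] [DecidableEq V] (n : ℕ)
    (hV : Fintype.card V = n) (G : SimpleGraph V) [DecidableRel G.Adj]
    (β : ℝ) (hβ0 : 0 < β) (hβ1 : β < 1) (p : ℕ) (hp : p = ⌈1 / β⌉₊ - 1)
    (hδ : ∀ v : V, (1 - β) * n ≤ (G.degree v : ℝ))
    (S : Finset V) (s t : ℕ) (hS : G.IsNClique s S)
    (ht : 2 ≤ t) (hts : t < s) (hsp : s ≤ p + 1) :
    (1 - β) * s * (Nat.choose (s - 2) (t - 1) : ℝ)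
          - ((t : ℝ) - 1) * (Nat.choose (s - 1) t : ℝ)
        + (Nat.choose (s - 2) (t - 2) : ℝ) * Dminus G n p β S
      ≤ ∑ T ∈ S.powersetCard t, Dminus G n p β T :=
  stmt_12_general n hV G β hβ0 p hp hδ S s t hS ht hts
end

section
/- For 0 < β < 1 with p = ⌈1/β⌉ − 1 and integer 2 ≤ t ≤ p, the polynomial g_r(β) = C(p−1,r)β^r + C(p−1,r−1)(1−(p−1)β)β^{r−1} + (1/2)C(p−1,r−2)(1−pβ)(1−(p−1)β)β^{r−2} satisfies (t+1)·g_{t+1}(β) = (1−tβ)·g_t(β) + (1/2)·C(p−1,t−2)·((p+1)β−1)·(1−(p−1)β)·(1−pβ)·β^{t−2}. -/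
/-- The density `g_r(β)` of `r`-cliques in the conjectured extremal graphs, with
clique-number parameter `p`. -/
noncomputable def gpoly (p r : ℕ) (β : ℝ) : ℝ :=
  (Nat.choose (p - 1) r : ℝ) * β ^ r
    + (Nat.choose (p - 1) (r - 1) : ℝ) * (1 - ((p : ℝ) - 1) * β) * β ^ (r - 1)
    + (1 / 2) * (Nat.choose (p - 1) (r - 2) : ℝ) * (1 - (p : ℝ) * β)
        * (1 - ((p : ℝ) - 1) * β) * β ^ (r - 2)

lemma choose_real (n k : ℕ) :
    ((k : ℝ) + 1) * (n.choose (k + 1) : ℝ) = ((n : ℝ) - k) * (n.choose k : ℝ) := by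
  rcases le_or_gt (k + 1) n with h | h
  · have hk : k ≤ n := Nat.le_of_succ_le h
    have hnat : n.choose (k + 1) * (k + 1) = n.choose k * (n - k) :=
      Nat.choose_succ_right_eq n k
    have hr := congrArg (Nat.cast (R := ℝ)) hnat
    push_cast [Nat.cast_sub hk] at hr
    linarith [hr]
  · have hnk : n ≤ k := Nat.lt_succ_iff.mp h
    rcases eq_or_lt_of_le hnk with rfl | hlt
    · simp [Nat.choose_succ_self]
    · rw [Nat.choose_eq_zero_of_lt (by omega), Nat.choose_eq_zero_of_lt hlt]
      ring

theorem stmt_13 (β : ℝ) (hβ0 : 0 < β) (hβ1 : β < 1)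
    (p : ℕ) (hp : p = ⌈1 / β⌉₊ - 1) (t : ℕ) (ht : 2 ≤ t) (htp : t ≤ p) :
    ((t : ℝ) + 1) * gpoly p (t + 1) β
      = (1 - (t : ℝ) * β) * gpoly p t β
        + (1 / 2) * (Nat.choose (p - 1) (t - 2) : ℝ) * (((p : ℝ) + 1) * β - 1)
            * (1 - ((p : ℝ) - 1) * β) * (1 - (p : ℝ) * β) * β ^ (t - 2) := by
  obtain ⟨s, rfl⟩ : ∃ s, t = s + 2 := ⟨t - 2, by omega⟩
  obtain ⟨q, rfl⟩ : ∃ q, p = q + 2 := ⟨p - 2, by omega⟩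
  have hA := choose_real (q + 1) (s + 2)
  have hB := choose_real (q + 1) (s + 1)
  have hC := choose_real (q + 1) s
  simp only [gpoly, show q + 2 - 1 = q + 1 from rfl,
    show s + 2 + 1 = s + 3 from rfl, show s + 3 - 1 = s + 2 from rfl,
    show s + 3 - 2 = s + 1 from rfl, show s + 2 - 1 = s + 1 from rfl,
    show s + 2 - 2 = s from rfl]
  push_cast at hA hB hC ⊢
  linear_combination (β ^ (s + 3)) * hA
    + (β ^ (s + 2) * (1 - ((q : ℝ) + 1) * β)) * hB
    + ((β ^ (s + 1) / 2) * (1 - ((q : ℝ) + 1) * β) * (1 - ((q : ℝ) + 2) * β)) * hC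
end

section
/- For 0 < β < 1 with p = ⌈1/β⌉ − 1 and integer 2 ≤ t ≤ p, with g_r(β) as defined, one has (t−1+(t+1)(p−2t+2)β)·g_{t+1}(β) = (1−tβ)(p−t+1)β·g_t(β) + (t−1)(t+2)·g_{t+2}(β). -/
theorem Nat.cast_choose_succ_mul {R : Type*} [Ring R] (n k : ℕ) :
    (n.choose (k + 1) : R) * (k + 1) = n.choose k * (n - k) := by
  rcases le_or_gt k n with hkn | hnk
  · have h := congrArg (Nat.cast (R := R)) (Nat.choose_succ_right_eq n k)
    push_cast [Nat.cast_sub hkn] at h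
    exact h
  · simp [Nat.choose_eq_zero_of_lt hnk, Nat.choose_eq_zero_of_lt (hnk.trans k.lt_succ_self)]

theorem Nat.cast_choose_succ {K : Type*} [DivisionRing K] [CharZero K] (n k : ℕ) :
    (n.choose (k + 1) : K) = n.choose k * (n - k) / (k + 1) := by
  rw [eq_div_iff (by exact_mod_cast k.succ_ne_zero)]
  exact Nat.cast_choose_succ_mul n k

theorem gpoly_add_two (p r : ℕ) (β : ℝ) :
    gpoly p (r + 2) β = (p - 1).choose (r + 2) * β ^ (r + 2)
      + (p - 1).choose (r + 1) * (1 - ((p : ℝ) - 1) * β) * β ^ (r + 1)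
      + 1 / 2 * (p - 1).choose r * (1 - (p : ℝ) * β) * (1 - ((p : ℝ) - 1) * β) * β ^ r := by
  rfl

theorem stmt_14_general (β : ℝ)
    (p : ℕ) (t : ℕ) (ht : 2 ≤ t) (htp : t ≤ p) :
    ((t : ℝ) - 1 + ((t : ℝ) + 1) * ((p : ℝ) - 2 * t + 2) * β) * gpoly p (t + 1) β
      = (1 - (t : ℝ) * β) * ((p : ℝ) - t + 1) * β * gpoly p t β
        + ((t : ℝ) - 1) * ((t : ℝ) + 2) * gpoly p (t + 2) β := by
  obtain ⟨a, rfl⟩ : ∃ a, t = a + 2 := ⟨t - 2, by omega⟩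
  obtain ⟨n, rfl⟩ : ∃ n, p = n + 1 := ⟨p - 1, by omega⟩
  rw [show a + 2 + 1 = (a + 1) + 2 by ring, show a + 2 + 2 = (a + 2) + 2 by ring,
    gpoly_add_two, gpoly_add_two, gpoly_add_two, Nat.add_sub_cancel]
  simp only [Nat.cast_choose_succ (K := ℝ) n, add_assoc, Nat.reduceAdd]
  push_cast
  field_simp
  ring

theorem stmt_14 (β : ℝ) (hβ0 : 0 < β) (hβ1 : β < 1)
    (p : ℕ) (hp : p = ⌈1 / β⌉₊ - 1) (t : ℕ) (ht : 2 ≤ t) (htp : t ≤ p) :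
    ((t : ℝ) - 1 + ((t : ℝ) + 1) * ((p : ℝ) - 2 * t + 2) * β) * gpoly p (t + 1) β
      = (1 - (t : ℝ) * β) * ((p : ℝ) - t + 1) * β * gpoly p t β
        + ((t : ℝ) - 1) * ((t : ℝ) + 2) * gpoly p (t + 2) β :=
  stmt_14_general β p t ht htp
end

section
/- Let n be a positive integer and 1/3 ≤ β < 1/2 with βn an integer, and let G be a graph on n vertices with minimum degree exactly (1−β)n. Then the number of triangles of G satisfies k_3(G) ≥ (1−2β)²β·n³. -/
open Finset

theorem stmt_16 {V : Type*} [Fintype V] [DecidableEq V] [Nonempty V] (n : ℕ)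
    (hn : 0 < n) (hV : Fintype.card V = n)
    (G : SimpleGraph V) [DecidableRel G.Adj]
    (β : ℝ) (hβ0 : 1 / 3 ≤ β) (hβ1 : β < 1 / 2)
    (hβn : ∃ m : ℕ, (m : ℝ) = β * n)
    (hδ : (G.minDegree : ℝ) = (1 - β) * n) :
    (1 - 2 * β) ^ 2 * β * n ^ 3 ≤ ((G.cliqueFinset 3).card : ℝ) := by
  classical
  set d := G.minDegree with hd
  set N := G.neighborFinset with hN
  -- the set of ordered triangles
  set T : Finset (V × V × V) :=
    univ.filter (fun p => G.Adj p.1 p.2.1 ∧ G.Adj p.1 p.2.2 ∧ G.Adj p.2.1 p.2.2) with hT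
  -- Step A : T.card as a double sum
  have hA : T.card = ∑ u, ∑ v ∈ N u, (N u ∩ N v).card := by
    rw [hT, card_filter, Fintype.sum_prod_type]
    refine Finset.sum_congr rfl fun u _ => ?_
    rw [Fintype.sum_prod_type]
    have hNu : N u = univ.filter (G.Adj u) := by
      ext v; simp [hN, SimpleGraph.mem_neighborFinset]
    rw [hNu, Finset.sum_filter]
    refine Finset.sum_congr rfl fun v _ => ?_
    by_cases h : G.Adj u v
    · simp only [h, if_true, true_and]
      have : filter (G.Adj u) univ ∩ N v = univ.filter (fun w => G.Adj u w ∧ G.Adj v w) := by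
        ext w; simp [hN, SimpleGraph.mem_neighborFinset]
      rw [this, ← card_filter]
    · simp [h]
  -- Step B : T.card ≤ 6 * number of triangles
  set f : V × V × V → Finset V := fun p => {p.1, p.2.1, p.2.2} with hf
  have himg : T.image f ⊆ G.cliqueFinset 3 := by
    intro t ht
    obtain ⟨p, hp, rfl⟩ := Finset.mem_image.1 ht
    rw [hT, Finset.mem_filter] at hp
    obtain ⟨-, h1, h2, h3⟩ := hp
    rw [SimpleGraph.mem_cliqueFinset_iff, hf]
    exact SimpleGraph.is3Clique_triple_iff.2 ⟨h1, h2, h3⟩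
  have hfiber : ∀ t ∈ T.image f, (T.filter (fun p => f p = t)).card ≤ 6 := by
    intro t ht
    have ht3 : t.card = 3 := ((SimpleGraph.mem_cliqueFinset_iff.1 (himg ht)).2)
    obtain ⟨a, b, c, hab, hac, hbc, rfl⟩ := Finset.card_eq_three.1 ht3
    have hsub : T.filter (fun p => f p = ({a, b, c} : Finset V)) ⊆
        ({(a,b,c), (a,c,b), (b,a,c), (b,c,a), (c,a,b), (c,b,a)} : Finset (V × V × V)) := by
      intro p hp
      obtain ⟨x, y, z⟩ := p
      rw [Finset.mem_filter, hT, Finset.mem_filter] at hp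
      obtain ⟨⟨-, h1, h2, h3⟩, heq⟩ := hp
      have hxy : x ≠ y := h1.ne
      have hxz : x ≠ z := h2.ne
      have hyz : y ≠ z := h3.ne
      simp only [hf] at heq
      have hx : x ∈ ({a, b, c} : Finset V) := by rw [← heq]; simp
      have hy : y ∈ ({a, b, c} : Finset V) := by rw [← heq]; simp
      have hz : z ∈ ({a, b, c} : Finset V) := by rw [← heq]; simp
      simp only [Finset.mem_insert, Finset.mem_singleton] at hx hy hz
      rcases hx with rfl | rfl | rfl <;> rcases hy with rfl | rfl | rfl <;>
        rcases hz with rfl | rfl | rfl <;> simp_all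
    calc (T.filter (fun p => f p = ({a,b,c} : Finset V))).card
        ≤ ({(a,b,c), (a,c,b), (b,a,c), (b,c,a), (c,a,b), (c,b,a)} : Finset (V × V × V)).card :=
          Finset.card_le_card hsub
      _ ≤ 6 := by
          refine le_trans (Finset.card_insert_le _ _) ?_
          refine le_trans (Nat.add_le_add_right (Finset.card_insert_le _ _) 1) ?_
          refine le_trans (Nat.add_le_add_right (Nat.add_le_add_right (Finset.card_insert_le _ _) 1) 1) ?_
          refine le_trans (Nat.add_le_add_right (Nat.add_le_add_right (Nat.add_le_add_right (Finset.card_insert_le _ _) 1) 1) 1) ?_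
          have := Finset.card_insert_le (c,a,b) ({(c,b,a)} : Finset (V × V × V))
          simp only [Finset.card_singleton] at this
          omega
  have hB : T.card ≤ 6 * (G.cliqueFinset 3).card := by
    rw [Finset.card_eq_sum_card_fiberwise (fun x hx => Finset.mem_image_of_mem f hx)]
    calc ∑ t ∈ T.image f, (T.filter (fun p => f p = t)).card
        ≤ ∑ _t ∈ T.image f, 6 := Finset.sum_le_sum hfiber
      _ = 6 * (T.image f).card := by rw [Finset.sum_const, smul_eq_mul, Nat.mul_comm]
      _ ≤ 6 * (G.cliqueFinset 3).card := Nat.mul_le_mul_left 6 (Finset.card_le_card himg)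
  -- Step C : lower bound on T.card
  have hcommon : ∀ u v : V, (2 : ℝ) * d - n ≤ ((N u ∩ N v).card : ℝ) := by
    intro u v
    have h1 := Finset.card_inter_add_card_union (N u) (N v)
    have h2 : (N u ∪ N v).card ≤ n := hV ▸ Finset.card_le_univ _
    have h3 : d ≤ (N u).card := G.minDegree_le_degree u
    have h4 : d ≤ (N v).card := G.minDegree_le_degree v
    have h5 : 2 * d ≤ (N u ∩ N v).card + n := by omega
    have h6 : (2 : ℝ) * d ≤ ((N u ∩ N v).card : ℝ) + n := by exact_mod_cast h5
    linarith
  have h2dn : (0 : ℝ) ≤ 2 * (d : ℝ) - n := by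
    rw [hδ]
    have hn' : (1 : ℝ) ≤ n := by exact_mod_cast hn
    nlinarith
  have hlowdeg : ∀ u : V, (d : ℝ) ≤ ((N u).card : ℝ) := fun u => by
    exact_mod_cast G.minDegree_le_degree u
  have hClow : (n : ℝ) * d * (2 * d - n) ≤ (T.card : ℝ) := by
    have : (T.card : ℝ) = ∑ u, ∑ v ∈ N u, ((N u ∩ N v).card : ℝ) := by
      rw [hA]; push_cast; ring_nf
    rw [this]
    calc (n : ℝ) * d * (2 * d - n) = ∑ _u : V, (d : ℝ) * (2 * d - n) := by
          rw [Finset.sum_const, Finset.card_univ, hV, nsmul_eq_mul]; ring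
      _ ≤ ∑ u, ∑ v ∈ N u, ((N u ∩ N v).card : ℝ) := by
          refine Finset.sum_le_sum fun u _ => ?_
          calc (d : ℝ) * (2 * d - n) ≤ ((N u).card : ℝ) * (2 * d - n) :=
                mul_le_mul_of_nonneg_right (hlowdeg u) h2dn
            _ = ∑ _v ∈ N u, (2 * (d:ℝ) - n) := by rw [Finset.sum_const, nsmul_eq_mul]
            _ ≤ ∑ v ∈ N u, ((N u ∩ N v).card : ℝ) :=
                Finset.sum_le_sum fun v _ => hcommon u v
  -- final arithmetic
  have hB' : (T.card : ℝ) ≤ 6 * ((G.cliqueFinset 3).card : ℝ) := by exact_mod_cast hB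
  have hkey : (n : ℝ) * ((1 - β) * n) * (2 * ((1 - β) * n) - n)
      = 6 * ((1 - 2 * β) ^ 2 * β * n ^ 3) + (1 - 2 * β) * (3 * β - 1) * (4 * β - 1) * n ^ 3 := by
    ring
  have hpos : (0 : ℝ) ≤ (1 - 2 * β) * (3 * β - 1) * (4 * β - 1) * n ^ 3 := by
    have hn3 : (0 : ℝ) ≤ (n : ℝ) ^ 3 := by positivity
    have h1 : (0 : ℝ) ≤ 1 - 2 * β := by linarith
    have h2 : (0 : ℝ) ≤ 3 * β - 1 := by linarith
    have h3 : (0 : ℝ) ≤ 4 * β - 1 := by linarith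
    positivity
  rw [hδ] at hClow
  linarith
end
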